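/- arXiv:2510.10773 — 4 statements merged into one kernel-verified Lean document; each statement's English description precedes it below -/
import Mathlib

section
/- Let G be a group, A an abelian group (written multiplicatively, trivial G-module), and α : G³ → A a group 3-cocycle. Let ρ : Γ → G be a group homomorphism, h ∈ G, and ρ' : Γ → G the conjugate homomorphism ρ'(a) = h·ρ(a)·h⁻¹. Define β : Γ² → A by β(a,b) = α(h, ρ(a), ρ(b)) · α(ρ'(a), ρ'(b), h) · α(ρ'(a), h, ρ(b))⁻¹. Then the ratio of pullback 3-cocycles satisfies (ρ*α)(a,b,c) / (ρ'*α)(a,b,c) = (dβ)(a,b,c) for all a,b,c ∈ Γ, where dβ(a,b,c) = β(b,c)·β(ab,c)⁻¹·β(a,bc)·β(a,b)⁻¹. -/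
/-!
Inner automorphisms act trivially on group cohomology, with an explicit witness in degree 3:
for `x' = h x h⁻¹`, the quotient `α(x, y, z) / α(x', y', z')` is the alternating product of
the cocycle identities at `(h, x, y, z)`, `(x', h, y, z)`, `(x', y', h, z)` and
`(x', y', z', h)`, which telescopes to the coboundary of the 2-cochain `conjCochain α h`.
Pulling this identity back along `ρ` gives the theorem.
-/

section

variable {G Γ A : Type*} [Group G] [Group Γ] [CommGroup A]

def IsThreeCocycle (α : G → G → G → A) : Prop :=
  ∀ g₁ g₂ g₃ g₄ : G,
    α g₂ g₃ g₄ * (α (g₁ * g₂) g₃ g₄)⁻¹ * α g₁ (g₂ * g₃) g₄ *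
      (α g₁ g₂ (g₃ * g₄))⁻¹ * α g₁ g₂ g₃ = 1

def coboundaryTwo (β : Γ → Γ → A) (a b c : Γ) : A :=
  β b c * (β (a * b) c)⁻¹ * β a (b * c) * (β a b)⁻¹

theorem coboundaryTwo_comp_monoidHom (β : G → G → A) (ρ : Γ →* G) (a b c : Γ) :
    coboundaryTwo (fun a b => β (ρ a) (ρ b)) a b c = coboundaryTwo β (ρ a) (ρ b) (ρ c) := by
  simp only [coboundaryTwo, map_mul]

def conjCochain (α : G → G → G → A) (h x y : G) : A :=
  α h x y * α (h * x * h⁻¹) (h * y * h⁻¹) h * (α (h * x * h⁻¹) h y)⁻¹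

theorem conj_mul_conj (h x y : G) : h * x * h⁻¹ * (h * y * h⁻¹) = h * (x * y) * h⁻¹ := by
  group

theorem IsThreeCocycle.div_conj_eq_coboundaryTwo {α : G → G → G → A} (hα : IsThreeCocycle α)
    (h x y z : G) :
    α x y z / α (h * x * h⁻¹) (h * y * h⁻¹) (h * z * h⁻¹)
      = coboundaryTwo (conjCochain α h) x y z := by
  have E₁ := hα h x y z
  have E₂ := hα (h * x * h⁻¹) h y z
  have E₃ := hα (h * x * h⁻¹) (h * y * h⁻¹) h z
  have E₄ := hα (h * x * h⁻¹) (h * y * h⁻¹) (h * z * h⁻¹) h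
  simp only [inv_mul_cancel_right, conj_mul_conj] at E₂ E₃ E₄
  apply_fun Additive.ofMul at E₁ E₂ E₃ E₄ ⊢
  simp only [coboundaryTwo, conjCochain, ofMul_mul, ofMul_inv, ofMul_div, ofMul_one]
    at E₁ E₂ E₃ E₄ ⊢
  linear_combination (norm := abel) E₁ - E₂ + E₃ - E₄

end

/-- For a 3-cocycle `α` on `G`, a homomorphism `ρ : Γ → G`, and the conjugate
homomorphism `ρ'(a) = h ρ(a) h⁻¹`, the ratio of pullback 3-cocycles `ρ*α / ρ'*α`
is the coboundary of the explicit 2-cochain `β`. -/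
theorem ratio_of_pullbacks_is_coboundary
    {G Γ A : Type*} [Group G] [Group Γ] [CommGroup A]
    (α : G → G → G → A)
    (hα : ∀ g₁ g₂ g₃ g₄ : G,
      α g₂ g₃ g₄ * (α (g₁ * g₂) g₃ g₄)⁻¹ * α g₁ (g₂ * g₃) g₄ *
        (α g₁ g₂ (g₃ * g₄))⁻¹ * α g₁ g₂ g₃ = 1)
    (ρ : Γ →* G) (h : G) (ρ' : Γ → G)
    (hρ' : ∀ a, ρ' a = h * ρ a * h⁻¹)
    (β : Γ → Γ → A)
    (hβ : ∀ a b, β a b = α h (ρ a) (ρ b) * α (ρ' a) (ρ' b) h * (α (ρ' a) h (ρ b))⁻¹) :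
    ∀ a b c : Γ,
      α (ρ a) (ρ b) (ρ c) / α (ρ' a) (ρ' b) (ρ' c)
        = β b c * (β (a * b) c)⁻¹ * β a (b * c) * (β a b)⁻¹ := by
  have hβ_eq : β = fun a b => conjCochain α h (ρ a) (ρ b) := by
    funext a b
    rw [hβ, hρ', hρ', conjCochain]
  intro a b c
  rw [hρ', hρ', hρ', hβ_eq]
  exact (IsThreeCocycle.div_conj_eq_coboundaryTwo hα h _ _ _).trans
    (coboundaryTwo_comp_monoidHom _ ρ a b c).symm
end

section
/- Let G be a group, A an abelian group, α a normalized 3-cocycle on G with values in A, g ∈ G, and ρ̃ : ℤ² → G given by ρ̃(x,y) = gˣ. Let e₁ = (1,0), e₂ = (0,1). Suppose γ̃ : ℤ² × ℤ² → A satisfies dγ̃ = ρ̃*α and γ̃(e₁,e₂) = γ̃(e₂,e₁). Then for every integer b ≥ 0, γ̃(b·e₁ + e₂, e₁) / γ̃(e₁, b·e₁ + e₂) = ∏_{j=0}^{b−1} α(g, gʲ, g)⁻¹. -/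
/-!
Evaluating `dγ̃ = ρ̃*α` at `(e₁, v, e₁)` and using that `ℤ²` is commutative expresses the ratio
`γ̃(v + e₁, e₁) / γ̃(e₁, v + e₁)` as the same ratio at `v` times `α(g, g^{v₁}, g)⁻¹`.
Iterating from `v = e₂`, where the ratio is `1` by the symmetry hypothesis, gives the product.
-/

section CoboundaryRatio

variable {M A : Type*} [AddCommMonoid M] [CommGroup A] {γ : M → M → A} {f : M → M → M → A}

theorem coboundary_ratio_add_left
    (hγ : ∀ u v w, γ v w * (γ (u + v) w)⁻¹ * γ u (v + w) * (γ u v)⁻¹ = f u v w) (u v : M) :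
    γ (u + v) u / γ u (u + v) = γ v u / γ u v * (f u v u)⁻¹ := by
  rw [← hγ u v u, add_comm v u]
  apply Additive.ofMul.injective
  simp only [ofMul_mul, ofMul_div, ofMul_inv]
  abel

theorem coboundary_ratio_nsmul_add
    (hγ : ∀ u v w, γ v w * (γ (u + v) w)⁻¹ * γ u (v + w) * (γ u v)⁻¹ = f u v w)
    (u v : M) (n : ℕ) :
    γ (n • u + v) u / γ u (n • u + v)
      = γ v u / γ u v * ∏ j ∈ Finset.range n, (f u (j • u + v) u)⁻¹ := by
  induction n with
  | zero => simp
  | succ n ih =>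
    rw [succ_nsmul', add_assoc, coboundary_ratio_add_left hγ, ih, Finset.prod_range_succ,
      mul_assoc]

end CoboundaryRatio

theorem dehn_twist_ratio_general
    {G A : Type*} [Group G] [CommGroup A]
    (α : G → G → G → A)
    (g : G)
    (γ : ℤ × ℤ → ℤ × ℤ → A)
    (hγ : ∀ u v w : ℤ × ℤ,
      γ v w * (γ (u + v) w)⁻¹ * γ u (v + w) * (γ u v)⁻¹
        = α (g ^ u.1) (g ^ v.1) (g ^ w.1))
    (hsym : γ (1, 0) (0, 1) = γ (0, 1) (1, 0)) :
    ∀ b : ℕ,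
      γ ((b : ℤ), 1) (1, 0) / γ (1, 0) ((b : ℤ), 1)
        = ∏ j ∈ Finset.range b, (α g (g ^ (j : ℤ)) g)⁻¹ := by
  intro b
  simpa [hsym] using coboundary_ratio_nsmul_add hγ (1, 0) (0, 1) b

/-- Dehn twist computation: if `dγ̃ = ρ̃*α` for `ρ̃(x,y) = gˣ` and
`γ̃(e₁,e₂) = γ̃(e₂,e₁)`, then
`γ̃(b·e₁+e₂, e₁)/γ̃(e₁, b·e₁+e₂) = ∏_{j=0}^{b-1} α(g,gʲ,g)⁻¹` for all `b ≥ 0`. -/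
theorem dehn_twist_ratio
    {G A : Type*} [Group G] [CommGroup A]
    (α : G → G → G → A)
    (hα : ∀ g₁ g₂ g₃ g₄ : G,
      α g₂ g₃ g₄ * (α (g₁ * g₂) g₃ g₄)⁻¹ * α g₁ (g₂ * g₃) g₄ *
        (α g₁ g₂ (g₃ * g₄))⁻¹ * α g₁ g₂ g₃ = 1)
    (hnorm : ∀ j k l : G, α 1 k l = 1 ∧ α j 1 l = 1 ∧ α j k 1 = 1)
    (g : G)
    (γ : ℤ × ℤ → ℤ × ℤ → A)
    (hγ : ∀ u v w : ℤ × ℤ,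
      γ v w * (γ (u + v) w)⁻¹ * γ u (v + w) * (γ u v)⁻¹
        = α (g ^ u.1) (g ^ v.1) (g ^ w.1))
    (hsym : γ (1, 0) (0, 1) = γ (0, 1) (1, 0)) :
    ∀ b : ℕ,
      γ ((b : ℤ), 1) (1, 0) / γ (1, 0) ((b : ℤ), 1)
        = ∏ j ∈ Finset.range b, (α g (g ^ (j : ℤ)) g)⁻¹ :=
  dehn_twist_ratio_general α g γ hγ hsym
end

section
/- Fix n ≥ 1, N ∈ ℤ, let G = ℤ/nℤ with α_N the 3-cocycle α_N(j,k,l) = 1 if k+l < n and e^{2πiNj/n} if k+l ≥ n (canonical representatives). Let ρ̃ : ℤ² → ℤ/nℤ be ρ̃(x,y) = x mod n, and let γ̃ : ℤ²×ℤ² → U(1) be defined by γ̃((x,y),(z,w)) = ∏_{k=0}^{x−1} α_N(1, k, z) for x ≥ 0 and ∏_{k=1}^{−x} α_N(1, −k, z)⁻¹ for x ≤ 0. Let A = [[a,b],[c,d]] ∈ SL₂(ℤ) with a ≡ 1 (mod n) and b ≡ 0 (mod n). Then γ̃(b·e₁ + d·e₂, a·e₁ + c·e₂) / γ̃(a·e₁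 + c·e₂, b·e₁ + d·e₂) = e^{2πiNb/n²}, where e₁ = (1,0) and e₂ = (0,1). -/
/-!
Since `a ≡ 1` and `b ≡ 0 (mod n)`, the denominator is a product of the trivial values
`α_N(1, k, 0)`, while the numerator is the product of `α_N(1, k, 1)` over `b` consecutive
integers `k`. Now `α_N(1, k, 1)` is `e^{2πiN/n}` when `k ≡ -1` and `1` otherwise, so each full
period of `n` consecutive `k` contributes `e^{2πiN/n}`, and `b = n m` gives
`e^{2πiNm/n} = e^{2πiNb/n²}`.
-/

open scoped Real

/-- The 3-cocycle `α_N(j,k,l) = 1` if `k+l < n` (canonical representatives)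
and `e^{2πiNj/n}` otherwise. -/
noncomputable def alphaN (n : ℕ) (N : ℤ) (j k l : ZMod n) : Circle :=
  if k.val + l.val < n then 1 else Circle.exp (2 * π * N * j.val / n)

/-- The explicit trivializing 2-cochain `γ̃` on `ℤ²` for the pullback of `α_N`
along `ρ̃(x,y) = x mod n`. -/
noncomputable def gammaTildeN (n : ℕ) (N : ℤ) (u v : ℤ × ℤ) : Circle :=
  if 0 ≤ u.1 then
    ∏ k ∈ Finset.range u.1.toNat, alphaN n N 1 ((k : ℤ) : ZMod n) ((v.1 : ZMod n))
  else
    ∏ k ∈ Finset.range (-u.1).toNat, (alphaN n N 1 ((-(k + 1) : ℤ) : ZMod n) ((v.1 : ZMod n)))⁻¹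

open Finset

section ZModProducts

variable {M : Type*} [CommMonoid M] {n : ℕ} [NeZero n]

theorem ZMod.prod_range_natCast (g : ZMod n → M) :
    ∏ i ∈ range n, g i = ∏ x : ZMod n, g x :=
  prod_nbij' (fun i => (i : ZMod n)) ZMod.val (by simp) (by simp [ZMod.val_lt])
    (fun i hi => ZMod.val_cast_of_lt (mem_range.mp hi)) (fun x _ => ZMod.natCast_zmod_val x)
    (fun _ _ => rfl)

theorem ZMod.prod_range_mul_natCast (g : ZMod n → M) (m : ℕ) :
    ∏ k ∈ range (n * m), g k = (∏ x : ZMod n, g x) ^ m := by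
  induction m with
  | zero => simp
  | succ m ih =>
    rw [Nat.mul_succ, prod_range_add, ih, pow_succ, ← ZMod.prod_range_natCast]
    congr 1
    refine prod_congr rfl fun i _ => ?_
    simp

end ZModProducts

section Cochains

variable {n : ℕ} [NeZero n] (N : ℤ)

theorem alphaN_right_zero (k : ZMod n) : alphaN n N 1 k 0 = 1 := by
  simp [alphaN, ZMod.val_lt]

theorem alphaN_one_one (k : ZMod n) :
    alphaN n N 1 k 1 = if k = -1 then Circle.exp (2 * π * N / n) else 1 := by
  obtain rfl | ⟨n, rfl⟩ : n = 1 ∨ ∃ m, n = m + 2 := by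
    have := NeZero.pos n; rcases n with _ | _ | n <;> simp_all
  · simp [alphaN, Subsingleton.elim k (-1), Subsingleton.elim (1 : ZMod 1) 0,
      Circle.exp_two_pi_mul_int]
  · have hk := ZMod.val_lt k
    have hk_eq : k = -1 ↔ k.val = n + 1 := by
      rw [← (ZMod.val_injective _).eq_iff, ZMod.val_neg_one]
    simp only [alphaN, ZMod.val_one'' (show n + 2 ≠ 1 by omega), hk_eq]
    split_ifs <;> first | omega | simp

theorem prod_alphaN_one_one :
    ∏ x : ZMod n, alphaN n N 1 x 1 = Circle.exp (2 * π * N / n) := by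
  simp [alphaN_one_one]

theorem prod_alphaN_neg_succ_one :
    ∏ x : ZMod n, alphaN n N 1 (-(x + 1)) 1 = Circle.exp (2 * π * N / n) := by
  simp [alphaN_one_one]

theorem gammaTildeN_of_right_eq_zero (u v : ℤ × ℤ) (hv : (v.1 : ZMod n) = 0) :
    gammaTildeN n N u v = 1 := by
  simp [gammaTildeN, hv, alphaN_right_zero]

theorem gammaTildeN_intCast_mul (m y : ℤ) (v : ℤ × ℤ) (hv : (v.1 : ZMod n) = 1) :
    gammaTildeN n N (n * m, y) v = Circle.exp (2 * π * N / n) ^ m := by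
  cases m with
  | ofNat m =>
    have hnm : (n * m : ℤ).toNat = n * m := by omega
    simp only [gammaTildeN, hv, Int.ofNat_eq_natCast, if_pos (by positivity : (0 : ℤ) ≤ n * m),
      hnm]
    push_cast
    rw [ZMod.prod_range_mul_natCast (fun x => alphaN n N 1 x 1), prod_alphaN_one_one]
    simp
  | negSucc m =>
    have hneg : n * Int.negSucc m < 0 :=
      mul_neg_of_pos_of_neg (by exact_mod_cast NeZero.pos n) (Int.negSucc_lt_zero m)
    have hnm : -(n * Int.negSucc m) = (n * (m + 1) : ℕ) := by
      rw [Int.negSucc_eq]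
      push_cast
      ring
    simp only [gammaTildeN, hv, if_neg hneg.not_ge, hnm, Int.toNat_natCast]
    push_cast
    rw [ZMod.prod_range_mul_natCast (fun x => (alphaN n N 1 (-(x + 1)) 1)⁻¹), prod_inv_distrib,
      prod_alphaN_neg_succ_one]
    simp

end Cochains

theorem character_value_on_Gamma1_general
    (n : ℕ) (hn : 0 < n) (N : ℤ) (a b c d : ℤ)
    (ha : a ≡ 1 [ZMOD (n : ℤ)]) (hb : b ≡ 0 [ZMOD (n : ℤ)]) :
    gammaTildeN n N (b, d) (a, c) / gammaTildeN n N (a, c) (b, d)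
      = Circle.exp (2 * π * N * b / (n : ℝ) ^ 2) := by
  have : NeZero n := ⟨hn.ne'⟩
  have ha' : (a : ZMod n) = 1 := by simpa using (ZMod.intCast_eq_intCast_iff a 1 n).2 ha
  have hb' : (b : ZMod n) = 0 := by simpa using (ZMod.intCast_eq_intCast_iff b 0 n).2 hb
  obtain ⟨m, rfl⟩ := (ZMod.intCast_zmod_eq_zero_iff_dvd b n).1 hb'
  rw [gammaTildeN_of_right_eq_zero N _ (_, _) hb', div_one,
    gammaTildeN_intCast_mul N m d (_, _) ha', ← Circle.exp_intCast_mul]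
  congr 1
  field_simp
  push_cast
  ring

/-- The character of `Γ₁(n)` computed from the 2-group cocycle data:
for `A = [[a,b],[c,d]] ∈ SL₂(ℤ)` with `a ≡ 1`, `b ≡ 0 (mod n)`,
`γ̃(b e₁ + d e₂, a e₁ + c e₂)/γ̃(a e₁ + c e₂, b e₁ + d e₂) = e^{2πiNb/n²}`. -/
theorem character_value_on_Gamma1
    (n : ℕ) (hn : 0 < n) (N : ℤ) (a b c d : ℤ)
    (hdet : a * d - b * c = 1)
    (ha : a ≡ 1 [ZMOD (n : ℤ)]) (hb : b ≡ 0 [ZMOD (n : ℤ)]) :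
    gammaTildeN n N (b, d) (a, c) / gammaTildeN n N (a, c) (b, d)
      = Circle.exp (2 * π * N * b / (n : ℝ) ^ 2) :=
  character_value_on_Gamma1_general n hn N a b c d ha hb
end

section
/- Fix n ≥ 1. For every pair (x,y) ∈ (ℤ/nℤ)², there exists a matrix A ∈ SL₂(ℤ) such that A·(x,y) = (d mod n, 0), where d = gcd(x̃, ỹ, n) for any integer lifts x̃, ỹ of x, y. Consequently, the orbits of the SL₂(ℤ)-action on (ℤ/nℤ)² are in bijection with the positive divisors of n. -/
/-- The orbit relation of the `SL₂(ℤ)`-action on `(ℤ/nℤ)²`. -/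
def SL2Orbit (n : ℕ) (p p' : ZMod n × ZMod n) : Prop :=
  ∃ a b c d : ℤ, a * d - b * c = 1 ∧
    p' = ((a : ZMod n) * p.1 + (b : ZMod n) * p.2,
          (c : ZMod n) * p.1 + (d : ZMod n) * p.2)

/-!
Bézout over `ℤ` gives a matrix of determinant one moving `(X, Y)` to `(gcd(X, Y), 0)`.
Applied first to the lifts `(x̃, ỹ)` and then to `(g, n)`, which is `(g, 0)` modulo `n`, it
moves `(x, y)` to `(gcd(x̃, ỹ, n), 0)`. Conversely `gcd(x̃, ỹ, n)` is an orbit invariant: for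
`d ∣ n`, reducing modulo `d` is a ring map, so any integer matrix preserves the property that
both coordinates vanish modulo `d`. The orbits are therefore classified by this invariant,
whose values are exactly the positive divisors `d` of `n`, attained at `(d, 0)`.
-/

theorem Int.exists_unimodular_to_gcd (X Y : ℤ) :
    ∃ a b c d : ℤ, a * d - b * c = 1 ∧ a * X + b * Y = X.gcd Y ∧ c * X + d * Y = 0 := by
  rcases Nat.eq_zero_or_pos (X.gcd Y) with hg | hg
  · obtain ⟨rfl, rfl⟩ := Int.gcd_eq_zero_iff.mp hg
    exact ⟨1, 0, 0, 1, by norm_num, by simp, by simp⟩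
  obtain ⟨X', Y', hcop, hX, hY⟩ := Int.exists_gcd_one hg
  obtain ⟨u, v, huv⟩ := Int.isCoprime_iff_gcd_eq_one.mpr hcop
  refine ⟨u, v, -Y', X', by linear_combination huv, ?_, ?_⟩
  · linear_combination u * hX + v * hY + (X.gcd Y : ℤ) * huv
  · linear_combination -Y' * hX + X' * hY

def orbitGcd (n : ℕ) (p : ZMod n × ZMod n) : ℕ := Nat.gcd (Nat.gcd p.1.val p.2.val) n

theorem orbitGcd_dvd (n : ℕ) (p : ZMod n × ZMod n) : orbitGcd n p ∣ n := Nat.gcd_dvd_right _ _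

theorem orbitGcd_natCast_zero {n d : ℕ} (hd : d ∣ n) : orbitGcd n ((d : ZMod n), 0) = d := by
  rw [orbitGcd, ZMod.val_natCast, ZMod.val_zero, Nat.gcd_zero_right, ← Nat.gcd_rec,
    Nat.gcd_eq_right hd]

theorem ZMod.castHom_eq_zero_iff_dvd_val {m n : ℕ} [NeZero n] (h : m ∣ n) (z : ZMod n) :
    ZMod.castHom h (ZMod m) z = 0 ↔ m ∣ z.val := by
  rw [← ZMod.natCast_zmod_val z, map_natCast, ZMod.natCast_eq_zero_iff,
    ZMod.val_natCast_of_lt z.val_lt]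

namespace SL2Orbit

variable {n : ℕ}

theorem symm {p q : ZMod n × ZMod n} (h : SL2Orbit n p q) : SL2Orbit n q p := by
  obtain ⟨a, b, c, d, hdet, rfl⟩ := h
  have hdet' : (a : ZMod n) * d - b * c = 1 := by
    exact_mod_cast congrArg (Int.cast : ℤ → ZMod n) hdet
  refine ⟨d, -b, -c, a, by linear_combination hdet, ?_⟩
  ext <;> dsimp only <;> push_cast
  · linear_combination -p.1 * hdet'
  · linear_combination -p.2 * hdet'

theorem trans {p q r : ZMod n × ZMod n} (h : SL2Orbit n p q) (h' : SL2Orbit n q r) :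
    SL2Orbit n p r := by
  obtain ⟨a, b, c, d, hdet, rfl⟩ := h
  obtain ⟨a', b', c', d', hdet', rfl⟩ := h'
  refine ⟨a' * a + b' * c, a' * b + b' * d, c' * a + d' * c, c' * b + d' * d,
    by linear_combination (a' * d' - b' * c') * hdet + hdet', ?_⟩
  ext <;> dsimp only <;> push_cast <;> ring

theorem intCast_gcd (X Y : ℤ) : SL2Orbit n (X, Y) ((X.gcd Y : ℕ), 0) := by
  obtain ⟨a, b, c, d, hdet, hgcd, hzero⟩ := Int.exists_unimodular_to_gcd X Y
  refine ⟨a, b, c, d, hdet, ?_⟩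
  ext <;> dsimp only
  · exact_mod_cast (congrArg (Int.cast : ℤ → ZMod n) hgcd).symm
  · exact_mod_cast (congrArg (Int.cast : ℤ → ZMod n) hzero).symm

variable [NeZero n]

theorem to_orbitGcd (p : ZMod n × ZMod n) : SL2Orbit n p (orbitGcd n p, 0) := by
  have hp : SL2Orbit n p (Nat.gcd p.1.val p.2.val, 0) := by
    have := intCast_gcd (n := n) p.1.val p.2.val
    rw [Int.gcd_natCast_natCast] at this
    simpa only [Int.cast_natCast, ZMod.natCast_zmod_val] using this
  -- `(g, n) = (g, 0)` in `(ℤ/nℤ)²`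
  have hg : SL2Orbit n ((Nat.gcd p.1.val p.2.val : ℕ), 0) (orbitGcd n p, 0) := by
    simpa [orbitGcd, Int.gcd_natCast_natCast] using
      intCast_gcd (n := n) (Nat.gcd p.1.val p.2.val) n
  exact hp.trans hg

theorem orbitGcd_dvd_orbitGcd {p q : ZMod n × ZMod n} (h : SL2Orbit n p q) :
    orbitGcd n p ∣ orbitGcd n q := by
  obtain ⟨a, b, c, d, -, rfl⟩ := h
  set φ := ZMod.castHom (orbitGcd_dvd n p) (ZMod (orbitGcd n p))
  have hp₁ : φ p.1 = 0 := (ZMod.castHom_eq_zero_iff_dvd_val _ _).mpr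
    ((Nat.gcd_dvd_left _ _).trans (Nat.gcd_dvd_left _ _))
  have hp₂ : φ p.2 = 0 := (ZMod.castHom_eq_zero_iff_dvd_val _ _).mpr
    ((Nat.gcd_dvd_left _ _).trans (Nat.gcd_dvd_right _ _))
  have hφ (s t : ℤ) : φ (s * p.1 + t * p.2) = 0 := by
    simp only [map_add, map_mul, hp₁, hp₂, mul_zero, add_zero]
  exact Nat.dvd_gcd (Nat.dvd_gcd ((ZMod.castHom_eq_zero_iff_dvd_val _ _).mp (hφ a b))
    ((ZMod.castHom_eq_zero_iff_dvd_val _ _).mp (hφ c d))) (orbitGcd_dvd n p)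

theorem iff_orbitGcd_eq {p q : ZMod n × ZMod n} :
    SL2Orbit n p q ↔ orbitGcd n p = orbitGcd n q :=
  ⟨fun h => Nat.dvd_antisymm (orbitGcd_dvd_orbitGcd h) (orbitGcd_dvd_orbitGcd h.symm),
    fun h => (to_orbitGcd p).trans (h ▸ (to_orbitGcd q).symm)⟩

end SL2Orbit

def orbitDivisor (n : ℕ) [NeZero n] (p : ZMod n × ZMod n) : {d : ℕ // 0 < d ∧ d ∣ n} :=
  ⟨orbitGcd n p, Nat.gcd_pos_of_pos_right _ (NeZero.pos n), orbitGcd_dvd n p⟩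

def SL2Orbit.quotEquivDivisors (n : ℕ) [NeZero n] :
    Quot (SL2Orbit n) ≃ {d : ℕ // 0 < d ∧ d ∣ n} :=
  (Quot.congrRight (r' := fun p q => orbitDivisor n p = orbitDivisor n q) fun _ _ => by
    rw [SL2Orbit.iff_orbitGcd_eq, Subtype.ext_iff]; rfl).trans <|
    Setoid.quotientKerEquivOfRightInverse (orbitDivisor n) (fun d => ((d : ℕ), 0))
      fun d => Subtype.ext (orbitGcd_natCast_zero d.2.2)

/-- Every `(x,y) ∈ (ℤ/nℤ)²` can be moved by `SL₂(ℤ)` to `(gcd(x̃,ỹ,n), 0)`;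
consequently the `SL₂(ℤ)`-orbits on `(ℤ/nℤ)²` are in bijection with the
positive divisors of `n`. -/
theorem SL2_orbits_on_ZMod_squared (n : ℕ) (hn : 0 < n) :
    (∀ x y : ZMod n, ∃ a b c d : ℤ, a * d - b * c = 1 ∧
      (a : ZMod n) * x + (b : ZMod n) * y
        = ((Nat.gcd (Nat.gcd x.val y.val) n : ℕ) : ZMod n) ∧
      (c : ZMod n) * x + (d : ZMod n) * y = 0) ∧
    Nonempty (Quot (SL2Orbit n) ≃ {d : ℕ // 0 < d ∧ d ∣ n}) := by
  have : NeZero n := NeZero.of_pos hn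
  refine ⟨fun x y => ?_, ⟨SL2Orbit.quotEquivDivisors n⟩⟩
  obtain ⟨a, b, c, d, hdet, hxy⟩ := SL2Orbit.to_orbitGcd (x, y)
  exact ⟨a, b, c, d, hdet, (Prod.ext_iff.mp hxy).1.symm, (Prod.ext_iff.mp hxy).2.symm⟩
end
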